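/- arXiv:math/0601575 — 6 statements merged into one kernel-verified Lean document; each statement's English description precedes it below -/
import Mathlib

section
/- Suppose F : A → B has both a left adjoint L and a right adjoint R, with A abelian. Then the counit ε_X : L F X → X is an epimorphism for every object X if and only if F X = 0 implies X = 0. -/
open CategoryTheory Limits

/-- If `F : A ⥤ B` has both a left adjoint `L` and a right adjoint `R`, with `A` abelian,
then the counit `ε_X : L F X ⟶ X` is an epimorphism for every `X` iff
`F X = 0` implies `X = 0`. -/
theorem stmt_2 {A B : Type*} [Category A] [Category B] [Abelian A] [Abelian B]
    (F : A ⥤ B) [F.Additive] (L R : B ⥤ A) (adj₁ : L ⊣ F) (adj₂ : F ⊣ R) :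
    (∀ X : A, Epi (adj₁.counit.app X)) ↔ (∀ X : A, IsZero (F.obj X) → IsZero X) := by
  constructor
  · intro hepi X hz
    haveI : L.IsLeftAdjoint := ⟨F, ⟨adj₁⟩⟩
    have h0 : IsZero (L.obj (F.obj X)) := L.map_isZero hz
    haveI := hepi X
    exact IsZero.of_epi_eq_zero (adj₁.counit.app X) (h0.eq_of_src _ _)
  · intro h X
    haveI : PreservesColimitsOfSize.{0, 0} F := adj₂.leftAdjoint_preservesColimits
    set ε := adj₁.counit.app X with hε
    -- F.map ε is a split epi, hence epi
    haveI : IsSplitEpi (F.map ε) :=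
      ⟨⟨⟨adj₁.unit.app (F.obj X), adj₁.right_triangle_components X⟩⟩⟩
    have hc : IsZero (cokernel (F.map ε)) := by
      apply IsZero.of_epi_eq_zero (cokernel.π (F.map ε))
      rw [← cancel_epi (F.map ε), cokernel.condition, comp_zero]
    have hc' : IsZero (F.obj (cokernel ε)) :=
      hc.of_iso (PreservesCokernel.iso F ε)
    have hz : IsZero (cokernel ε) := h _ hc'
    exact Abelian.epi_of_cokernel_π_eq_zero _ (hz.eq_of_tgt _ _)
end

section
/- Suppose F : A → B has both a left adjoint L and a right adjoint R, with A abelian. Then the unit η_X : X → R F X is a monomorphism for every object X if and only if F X = 0 implies X = 0. -/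
open CategoryTheory Limits

/-- If `F : A ⥤ B` has both a left adjoint `L` and a right adjoint `R`, with `A` abelian,
then the unit `η_X : X ⟶ R F X` is a monomorphism for every `X` iff
`F X = 0` implies `X = 0`. -/
theorem stmt_3 {A B : Type*} [Category A] [Category B] [Abelian A] [Abelian B]
    (F : A ⥤ B) [F.Additive] (L R : B ⥤ A) (adj₁ : L ⊣ F) (adj₂ : F ⊣ R) :
    (∀ X : A, Mono (adj₂.unit.app X)) ↔ (∀ X : A, IsZero (F.obj X) → IsZero X) := by
  have hR : R.IsRightAdjoint := ⟨F, ⟨adj₂⟩⟩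
  have hFL : PreservesLimits F := adj₁.rightAdjoint_preservesLimits
  constructor
  · intro hmono X hFX
    have h1 : (𝟙 (F.obj X) : F.obj X ⟶ F.obj X) = 0 := hFX.eq_of_src _ _
    have h2 : (𝟙 (R.obj (F.obj X)) : R.obj (F.obj X) ⟶ R.obj (F.obj X)) = 0 := by
      rw [← R.map_id, h1, R.map_zero]
    have hZ : IsZero ((F ⋙ R).obj X) := IsZero.of_iso (((IsZero.iff_id_eq_zero _).mpr h2)) (Iso.refl _)
    have h3 : adj₂.unit.app X = 0 := hZ.eq_of_tgt _ _
    have := hmono X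
    rw [IsZero.iff_id_eq_zero _, ← cancel_mono (adj₂.unit.app X), h3, comp_zero, comp_zero]
  · intro hzero X
    -- F preserves kernels, and F (η_X) is a split mono by the triangle identity
    have hsplit : IsSplitMono (F.map (adj₂.unit.app X)) :=
      ⟨⟨⟨adj₂.counit.app (F.obj X), adj₂.left_triangle_components X⟩⟩⟩
    have hmonoF : Mono (F.map (adj₂.unit.app X)) := inferInstance
    -- the kernel comparison is an iso since F preserves limits
    have hiso : IsIso (kernelComparison (adj₂.unit.app X) F) := inferInstance
    have hker : IsZero (kernel (F.map (adj₂.unit.app X))) :=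
      IsZero.of_iso (isZero_zero B) (kernel.ofMono (F.map (adj₂.unit.app X)))
    have hFK : IsZero (F.obj (kernel (adj₂.unit.app X))) :=
      hker.of_iso (asIso (kernelComparison (adj₂.unit.app X) F))
    have hK : IsZero (kernel (adj₂.unit.app X)) := hzero _ hFK
    exact Preadditive.mono_of_isZero_kernel _ hK
end

section
/- Let F : A → B be a faithful exact functor with left adjoint L and right adjoint R. Then the exact structure on A given by F-split short exact sequences has enough projectives and enough injectives: for every X, the counit L F X → X is an F-split epimorphism from a Δ-projective object, and the unit X → R F X is an F-split monomorphism into a Δ-injective object. -/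
open CategoryTheory Limits

/-- An object of `A` is `Δ`-projective if it has the lifting property against all
`F`-split epimorphisms. -/
def DeltaProjective {A B : Type*} [Category A] [Category B] [Abelian A] [Abelian B]
    (F : A ⥤ B) (P : A) : Prop :=
  ∀ {M N : A} (p : M ⟶ N), Epi p → IsSplitEpi (F.map p) →
    ∀ g : P ⟶ N, ∃ h : P ⟶ M, h ≫ p = g

/-- An object of `A` is `Δ`-injective if it has the extension property against all
`F`-split monomorphisms. -/
def DeltaInjective {A B : Type*} [Category A] [Category B] [Abelian A] [Abelian B]
    (F : A ⥤ B) (I : A) : Prop :=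
  ∀ {M N : A} (i : M ⟶ N), Mono i → IsSplitMono (F.map i) →
    ∀ g : M ⟶ I, ∃ h : N ⟶ I, i ≫ h = g

/-- For a faithful exact functor `F` with adjoints `L ⊣ F ⊣ R`, the `F`-split exact
structure on `A` has enough projectives and injectives: the counit `L F X ⟶ X` is an
`F`-split epimorphism from a `Δ`-projective object, and the unit `X ⟶ R F X` is an
`F`-split monomorphism into a `Δ`-injective object. -/
theorem stmt_8 {A B : Type*} [Category A] [Category B] [Abelian A] [Abelian B]
    (F : A ⥤ B) [F.Additive] [F.Faithful]
    [PreservesFiniteLimits F] [PreservesFiniteColimits F]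
    (L R : B ⥤ A) (adj₁ : L ⊣ F) (adj₂ : F ⊣ R) (X : A) :
    (Epi (adj₁.counit.app X) ∧ IsSplitEpi (F.map (adj₁.counit.app X)) ∧
      DeltaProjective F (L.obj (F.obj X))) ∧
    (Mono (adj₂.unit.app X) ∧ IsSplitMono (F.map (adj₂.unit.app X)) ∧
      DeltaInjective F (R.obj (F.obj X))) := by
  have hse : IsSplitEpi (F.map (adj₁.counit.app X)) :=
    ⟨⟨⟨adj₁.unit.app (F.obj X), adj₁.right_triangle_components X⟩⟩⟩
  have hsm : IsSplitMono (F.map (adj₂.unit.app X)) :=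
    ⟨⟨⟨adj₂.counit.app (F.obj X), adj₂.left_triangle_components X⟩⟩⟩
  refine ⟨⟨F.epi_of_epi_map hse.epi, hse, ?_⟩, F.mono_of_mono_map hsm.mono, hsm, ?_⟩
  · intro M N p _ hp g
    refine ⟨(adj₁.homEquiv (F.obj X) M).symm
      (adj₁.homEquiv (F.obj X) N g ≫ section_ (F.map p)), ?_⟩
    apply (adj₁.homEquiv (F.obj X) N).injective
    rw [Adjunction.homEquiv_naturality_right, Equiv.apply_symm_apply, Category.assoc,
      IsSplitEpi.id, Category.comp_id]
  · intro M N i _ hi g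
    refine ⟨adj₂.homEquiv N (F.obj X)
      (retraction (F.map i) ≫ (adj₂.homEquiv M (F.obj X)).symm g), ?_⟩
    rw [← Adjunction.homEquiv_naturality_left, ← Category.assoc,
      IsSplitMono.id, Category.id_comp, Equiv.apply_symm_apply]
end

section
/- Let kG be the group algebra of a finite group over a field k, and W a finite-dimensional kG-module. The functor X ↦ X ⊗_k Ω_{kG}(k) (tensor over k with diagonal G-action) sends W-split short exact sequences of kG-modules to W-split short exact sequences, and hence induces a triangulated endofunctor of the W-stable category isomorphic to the Heller translate Ω_{kG}. -/
open CategoryTheory MonoidalCategory Limits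

/-!
Over a field every module is flat, so tensoring with a fixed module `M` preserves short exact
sequences; and `W ⊗ (M ⊗ -) ≅ M ⊗ (W ⊗ -)` through the braiding, so a splitting of `W ⊗ S`
yields one of `W ⊗ (M ⊗ S)`.
-/

/-- A short exact sequence `S` of `kG`-modules is `W`-split if it is short exact and
becomes split after tensoring with `W` over `k` (with the diagonal `G`-action). -/
def WSplit {k : Type} [Field k] {G : Type} [Group G]
    (W : Rep k G) (S : ShortComplex (Rep k G)) : Prop :=
  S.ShortExact ∧ Nonempty ((S.map (tensorLeft W)).Splitting)

universe u

namespace Rep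

variable {k : Type u} {G : Type*} [CommRing k] [Monoid G]

theorem shortExact_iff_function_exact {S : ShortComplex (Rep k G)} :
    S.ShortExact ↔ Function.Injective S.f.hom ∧ Function.Exact S.f.hom S.g.hom ∧
      Function.Surjective S.g.hom := by
  let F := forget₂ (Rep k G) (ModuleCat k)
  constructor
  · intro hS
    exact ⟨(mono_iff_injective _).1 hS.mono_f,
      (ShortComplex.ShortExact.moduleCat_exact_iff_function_exact _).1 (hS.exact.map F),
      (epi_iff_surjective _).1 hS.epi_g⟩
  · rintro ⟨hf, hfg, hg⟩
    have := (mono_iff_injective _).2 hf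
    have := (epi_iff_surjective _).2 hg
    exact ⟨(ShortComplex.exact_map_iff_of_faithful S F).1
      ((ShortComplex.ShortExact.moduleCat_exact_iff_function_exact (S.map F)).2 hfg)⟩

theorem shortExact_map_tensorLeft (M : Rep k G) [Module.Flat k M.V]
    {S : ShortComplex (Rep k G)} (hS : S.ShortExact) :
    (S.map (tensorLeft M)).ShortExact := by
  obtain ⟨hf, hfg, hg⟩ := shortExact_iff_function_exact.1 hS
  exact shortExact_iff_function_exact.2
    ⟨Module.Flat.lTensor_preserves_injective_linearMap (M := M.V) _ hf,
      Module.Flat.lTensor_exact M.V hfg, LinearMap.lTensor_surjective M.V hg⟩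

end Rep

namespace CategoryTheory.ShortComplex.Splitting

variable {C : Type*} [Category C] [Preadditive C] [MonoidalCategory C] [MonoidalPreadditive C]
  [BraidedCategory C]

def mapTensorLeft {W : C} {S : ShortComplex C} (s : (S.map (tensorLeft W)).Splitting) (M : C) :
    ((S.map (tensorLeft M)).map (tensorLeft W)).Splitting :=
  (s.map (tensorLeft M)).ofIso <| S.mapNatIso <|
    (tensorLeftTensor M W).symm ≪≫ (tensoringLeft C).mapIso (β_ M W) ≪≫ tensorLeftTensor W M

end CategoryTheory.ShortComplex.Splitting

theorem WSplit.map_tensorLeft {k : Type} [Field k] {G : Type} [Group G] {W : Rep k G}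
    {S : ShortComplex (Rep k G)} (hS : WSplit W S) (M : Rep k G) :
    WSplit W (S.map (tensorLeft M)) :=
  ⟨Rep.shortExact_map_tensorLeft M hS.1, ⟨hS.2.some.mapTensorLeft M⟩⟩

theorem stmt_11_general {k : Type} [Field k] {G : Type} [Group G]
    (W : Rep k G)
    (P : Rep k G)
    (π : P ⟶ 𝟙_ (Rep k G))
    (S : ShortComplex (Rep k G)) (hS : WSplit W S) :
    WSplit W (S.map (tensorLeft (kernel π))) :=
  hS.map_tensorLeft (kernel π)

/-- Let `G` be a finite group and `k` a field of characteristic dividing `|G|`, and let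
`W` be a finite-dimensional `kG`-module. Let `Ω(k) = ker π` be the Heller translate of the
trivial module `k`, where `π : P ⟶ k` is an epimorphism from a projective module. Then the
functor `X ↦ Ω(k) ⊗ X` (diagonal `G`-action) sends `W`-split short exact sequences to
`W`-split short exact sequences (hence induces a triangulated endofunctor of the
`W`-stable category isomorphic to the Heller translate `Ω_{kG}`). -/
theorem stmt_11 {k : Type} [Field k] {G : Type} [Group G] [Fintype G]
    (hchar : (Fintype.card G : k) = 0)
    (W : Rep k G) (hW : FiniteDimensional k W.V)
    (P : Rep k G) (hP : Projective P)
    (π : P ⟶ 𝟙_ (Rep k G)) (hπ : Epi π)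
    (S : ShortComplex (Rep k G)) (hS : WSplit W S) :
    WSplit W (S.map (tensorLeft (kernel π))) :=
  stmt_11_general W P π S hS
end

section
/- Let P be a bounded cochain complex all of whose terms are F-projective, and let S be an F-split acyclic complex. Then Hom_{K(A)}(P, S) = 0. -/
/-!
A null-homotopy of `f` is a `(-1)`-cochain `γ` with `δ γ = f`, built by descending induction on
the degree, starting above the top of `P`. At each step the defect `f - δ γ` is a cocycle vanishing
above degree `n`, so its component in degree `n` lands in the cocycles of `S` and only has to be
lifted along `S.d (n - 1) n`. As `P.X n` is a summand of some `L Y`, the adjunction moves this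
lifting problem into `B`, where it is solved by the contracting homotopy of `F S`.
-/

open CategoryTheory Limits

/-- An object of `A` is `F`-projective if it is a direct summand of `L Y` for some `Y`. -/
def FProjective {A B : Type*} [Category A] [Category B] (L : B ⥤ A) (P : A) : Prop :=
  ∃ (Y : B) (i : P ⟶ L.obj Y) (r : L.obj Y ⟶ P), i ≫ r = 𝟙 P

theorem FProjective.exists_lift {A B : Type*} [Category A] [Category B]
    [HasZeroMorphisms A] [HasZeroMorphisms B] {F : A ⥤ B} [F.PreservesZeroMorphisms]
    {L : B ⥤ A} (adj : L ⊣ F) {X : A} (hX : FProjective L X) {N M M' : A}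
    (p : N ⟶ M) (q : M ⟶ M')
    (hF : ∀ {Y : B} (u : Y ⟶ F.obj M), u ≫ F.map q = 0 → ∃ v, v ≫ F.map p = u)
    (g : X ⟶ M) (hg : g ≫ q = 0) : ∃ t : X ⟶ N, t ≫ p = g := by
  obtain ⟨Y, i, r, hir⟩ := hX
  obtain ⟨v, hv⟩ := hF (adj.homEquiv _ _ (r ≫ g)) (by
    rw [← Adjunction.homEquiv_naturality_right, Category.assoc, hg, comp_zero,
      Adjunction.homEquiv_unit, Functor.map_zero, comp_zero])
  refine ⟨i ≫ (adj.homEquiv _ _).symm v, ?_⟩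
  rw [Category.assoc, ← Adjunction.homEquiv_naturality_right_symm, hv, Equiv.symm_apply_apply,
    ← Category.assoc, hir, Category.id_comp]

theorem Homotopy.exists_lift_of_comp_d_eq_zero {V ι : Type*} [Category V] [Preadditive V]
    {c : ComplexShape ι} {K : HomologicalComplex V c} (h : Homotopy (𝟙 K) 0) {i j k : ι}
    (hij : c.Rel i j) (hjk : c.Rel j k) {Y : V} (u : Y ⟶ K.X j) (hu : u ≫ K.d j k = 0) :
    ∃ v : Y ⟶ K.X i, v ≫ K.d i j = u := by
  refine ⟨u ≫ h.hom j i, ?_⟩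
  have hcomm := h.comm j
  rw [dNext_eq h.hom hjk, prevD_eq h.hom hij] at hcomm
  simpa [Preadditive.comp_add, reassoc_of% hu] using (u ≫= hcomm).symm

namespace CochainComplex.HomComplex.Cochain

variable {C : Type*} [Category C] [Preadditive C] {K L : CochainComplex C ℤ}

theorem v_comp_d_eq_zero_of_δ_eq_zero (z : Cochain K L 0) (hz : δ 0 1 z = 0) (n : ℤ)
    (hn : z.v (n + 1) (n + 1) (add_zero _) = 0) :
    z.v n n (add_zero n) ≫ L.d n (n + 1) = 0 := by
  simpa [hn] using congr_v hz n (n + 1) rfl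

theorem v_sub_δ_single_eq_zero (z : Cochain K L 0) (n : ℤ)
    (hn : ∀ p, n < p → z.v p p (add_zero p) = 0)
    (t : K.X n ⟶ L.X (n - 1)) (ht : t ≫ L.d (n - 1) n = z.v n n (add_zero n))
    (p : ℤ) (hp : n ≤ p) : (z - δ (-1) 0 (single t (-1))).v p p (add_zero p) = 0 := by
  rw [δ_single t (-1) 0 (by norm_num) (n - 1) n (by ring) (by ring), sub_v, add_v,
    units_smul_v, single_v_eq_zero _ _ _ _ _ (show p ≠ n - 1 by lia), smul_zero, add_zero]
  obtain rfl | hlt := hp.eq_or_lt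
  · rw [single_v, ht, sub_self]
  · rw [single_v_eq_zero _ _ _ _ _ hlt.ne', hn p hlt, sub_zero]

theorem exists_δ_eq_of_bounded {a b : ℤ} (hK : ∀ i, (i < a ∨ b < i) → IsZero (K.X i))
    (hlift : ∀ (n : ℤ) (g : K.X n ⟶ L.X n), g ≫ L.d n (n + 1) = 0 →
      ∃ t : K.X n ⟶ L.X (n - 1), t ≫ L.d (n - 1) n = g)
    (z : Cochain K L 0) (hz : δ 0 1 z = 0) : ∃ γ : Cochain K L (-1), δ (-1) 0 γ = z := by
  have approx : ∀ k : ℕ, ∃ γ : Cochain K L (-1),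
      ∀ p, b + 1 - k ≤ p → (z - δ (-1) 0 γ).v p p (add_zero p) = 0 := by
    intro k
    induction k with
    | zero => exact ⟨0, fun p hp => (hK p (Or.inr (by lia))).eq_of_src _ _⟩
    | succ k ih =>
      obtain ⟨γ, hγ⟩ := ih
      have hcocycle : δ 0 1 (z - δ (-1) 0 γ) = 0 := by rw [δ_sub, hz, δ_δ, sub_zero]
      obtain ⟨t, ht⟩ := hlift (b - k) _
        (v_comp_d_eq_zero_of_δ_eq_zero _ hcocycle _ (hγ _ (by lia)))
      refine ⟨γ + single t (-1), fun p hp => ?_⟩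
      rw [δ_add, ← sub_sub]
      exact v_sub_δ_single_eq_zero _ _ (fun p hp => hγ p (by lia)) t ht p (by lia)
  obtain ⟨γ, hγ⟩ := approx (b + 1 - a).toNat
  refine ⟨γ, (sub_eq_zero.mp (ext₀ _ _ fun p => ?_)).symm⟩
  by_cases hp : a ≤ p
  · exact hγ p (by lia)
  · exact (hK p (Or.inl (by lia))).eq_of_src _ _

end CochainComplex.HomComplex.Cochain

namespace CochainComplex

open HomComplex

theorem nonempty_homotopy_zero_of_bounded {C : Type*} [Category C] [Preadditive C]
    {K L : CochainComplex C ℤ} {a b : ℤ} (hK : ∀ i, (i < a ∨ b < i) → IsZero (K.X i))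
    (hlift : ∀ (n : ℤ) (g : K.X n ⟶ L.X n), g ≫ L.d n (n + 1) = 0 →
      ∃ t : K.X n ⟶ L.X (n - 1), t ≫ L.d (n - 1) n = g)
    (f : K ⟶ L) : Nonempty (Homotopy f 0) := by
  obtain ⟨γ, hγ⟩ := Cochain.exists_δ_eq_of_bounded hK hlift (Cochain.ofHom f) (δ_ofHom f)
  exact ⟨(Cochain.equivHomotopy f 0).symm ⟨γ, by rw [Cochain.ofHom_zero, add_zero, hγ]⟩⟩

end CochainComplex

theorem stmt_14_general {A B : Type*} [Category A] [Category B] [Abelian A] [Abelian B]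
    (F : A ⥤ B) [F.Additive]
    (L : B ⥤ A) (adj : L ⊣ F)
    (P S : CochainComplex A ℤ)
    (hbdd : ∃ a b : ℤ, ∀ i : ℤ, (i < a ∨ b < i) → IsZero (P.X i))
    (hproj : ∀ i : ℤ, FProjective L (P.X i))
    (hS : Nonempty (Homotopy (𝟙 ((F.mapHomologicalComplex (ComplexShape.up ℤ)).obj S)) 0))
    (f : P ⟶ S) :
    Nonempty (Homotopy f 0) := by
  obtain ⟨a, b, hP⟩ := hbdd
  obtain ⟨h⟩ := hS
  refine CochainComplex.nonempty_homotopy_zero_of_bounded hP (fun n g hg => ?_) f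
  refine (hproj n).exists_lift adj (S.d (n - 1) n) (S.d n (n + 1)) (fun u hu => ?_) g hg
  exact h.exists_lift_of_comp_d_eq_zero (by simp) (by simp) u hu

/-- If `P` is a bounded cochain complex of `F`-projective objects and `S` is an
`F`-split acyclic complex (`F S` contractible), then every chain map `P ⟶ S` is
null-homotopic, i.e. `Hom_{K(A)}(P, S) = 0`. -/
theorem stmt_14 {A B : Type*} [Category A] [Category B] [Abelian A] [Abelian B]
    (F : A ⥤ B) [F.Additive] [PreservesFiniteLimits F] [PreservesFiniteColimits F]
    (L : B ⥤ A) (adj : L ⊣ F)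
    (P S : CochainComplex A ℤ)
    (hbdd : ∃ a b : ℤ, ∀ i : ℤ, (i < a ∨ b < i) → IsZero (P.X i))
    (hproj : ∀ i : ℤ, FProjective L (P.X i))
    (hS : Nonempty (Homotopy (𝟙 ((F.mapHomologicalComplex (ComplexShape.up ℤ)).obj S)) 0))
    (f : P ⟶ S) :
    Nonempty (Homotopy f 0) :=
  stmt_14_general F L adj P S hbdd hproj hS f
end

section
/- Suppose 0 → X → Y → Z → 0 is a short exact sequence of cochain complexes over A such that 0 → F X → F Y → F Z → 0 is degreewise split (split short exact as a sequence of complexes after applying F). Then the natural quasi-isomorphism φ : cone(f) → Z (where f : X → Y) has F-split contractible cone; explicitly, F cone(φ) is contractible via the homotopy built from the splitting maps, so X → Y → Z → X[1] is a distinguished triangle in D_F(A). -/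
/-! If `(r, s)` splits `F X ⟶ F Y ⟶ F Z` by chain maps, then `descShortComplex : cone(F f) ⟶ F Z`
is a homotopy equivalence with inverse `s ≫ inr`, the homotopy on the cone being `-(r ≫ inl)`.
As `F` commutes with mapping cones, `F φ` is therefore an isomorphism in the homotopy category,
so the cone of `F φ`, which is `F cone(φ)`, is zero there, i.e. contractible. -/

open CategoryTheory Limits CochainComplex HomComplex

/-- A complex is `F`-split acyclic if its image under `F` is contractible. -/
def FSplitContractible {A B : Type*} [Category A] [Category B] [Abelian A] [Abelian B]
    (F : A ⥤ B) [F.Additive] (S : CochainComplex A ℤ) : Prop :=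
  Nonempty (Homotopy (𝟙 ((F.mapHomologicalComplex (ComplexShape.up ℤ)).obj S)) 0)

namespace CochainComplex.mappingCone

variable {C : Type*} [Category C] [Abelian C]

noncomputable def descShortComplexHomotopyEquiv {T : ShortComplex (CochainComplex C ℤ)}
    (σ : T.Splitting) : HomotopyEquiv (mappingCone T.f) T.X₃ where
  hom := descShortComplex T
  inv := σ.s ≫ inr T.f
  homotopyHomInvId :=
    descHomotopy T.f _ _ 0 (-(Cochain.ofHom σ.r).comp (inl T.f) (zero_add (-1)))
      (by
        ext p q _
        have h := HomologicalComplex.congr_hom σ.f_r p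
        simp only [HomologicalComplex.comp_f, HomologicalComplex.id_f] at h
        simp [reassoc_of% h])
      (by
        ext p
        have h := HomologicalComplex.congr_hom σ.id p
        simp only [HomologicalComplex.comp_f, HomologicalComplex.add_f_apply,
          HomologicalComplex.id_f] at h
        have h' : T.g.f p ≫ σ.s.f p = 𝟙 _ - σ.r.f p ≫ T.f.f p := eq_sub_of_add_eq' h
        simp [reassoc_of% h', sub_eq_neg_add])
  homotopyInvHomId := Homotopy.ofEq (by simp)

lemma isZero_quotient_obj_mappingCone {K L : CochainComplex C ℤ} (φ : K ⟶ L)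
    [IsIso ((HomotopyCategory.quotient C (ComplexShape.up ℤ)).map φ)] :
    IsZero ((HomotopyCategory.quotient C (ComplexShape.up ℤ)).obj (mappingCone φ)) :=
  Pretriangulated.Triangle.isZero₃_of_isIso₁ _
    (HomotopyCategory.mappingCone_triangleh_distinguished φ)
    (inferInstanceAs (IsIso ((HomotopyCategory.quotient C _).map φ)))

end CochainComplex.mappingCone

lemma fSplitContractible_mappingCone {A B : Type*} [Category A] [Category B] [Abelian A]
    [Abelian B] (F : A ⥤ B) [F.Additive] {K L : CochainComplex A ℤ} (φ : K ⟶ L)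
    (hφ : IsIso ((HomotopyCategory.quotient B (ComplexShape.up ℤ)).map
      ((F.mapHomologicalComplex (ComplexShape.up ℤ)).map φ))) :
    FSplitContractible F (mappingCone φ) :=
  (HomotopyCategory.isZero_quotient_obj_iff _).1
    ((mappingCone.isZero_quotient_obj_mappingCone _).of_iso
      ((HomotopyCategory.quotient B _).mapIso (mappingCone.mapHomologicalComplexIso φ F)))

/-- Given a short exact sequence of cochain complexes `0 ⟶ X ⟶ Y ⟶ Z ⟶ 0` whose image
under `F` is a split short exact sequence of complexes, the canonical quasi-isomorphism
`φ : cone(f) ⟶ Z` (with components `(0, g)`) has `F`-split contractible mapping cone;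
hence `X ⟶ Y ⟶ Z ⟶ X[1]` is a distinguished triangle in `D_F(A)`. -/
theorem stmt_18 {A B : Type*} [Category A] [Category B] [Abelian A] [Abelian B]
    (F : A ⥤ B) [F.Additive]
    (S : ShortComplex (CochainComplex A ℤ))
    (hsplit : Nonempty ((S.map (F.mapHomologicalComplex (ComplexShape.up ℤ))).Splitting)) :
    FSplitContractible F (CochainComplex.mappingCone
      (CochainComplex.mappingCone.desc S.f (0 : Cochain S.X₁ S.X₃ (-1)) S.g
        (by simp [S.zero]))) := by
  obtain ⟨σ⟩ := hsplit
  let e := (HomotopyEquiv.ofIso (mappingCone.mapHomologicalComplexIso S.f F)).trans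
    (mappingCone.descShortComplexHomotopyEquiv σ)
  have he : e.hom = (F.mapHomologicalComplex _).map (mappingCone.descShortComplex S) :=
    mappingCone.mapHomologicalComplexIso_hom_descShortComplex F S
  have hiso := (HomotopyCategory.isoOfHomotopyEquiv e).isIso_hom
  rw [HomotopyCategory.isoOfHomotopyEquiv_hom, he] at hiso
  exact fSplitContractible_mappingCone F _ hiso
end
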